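/- arXiv:1812.09392 — 9 statements merged into one kernel-verified Lean document; each statement's English description precedes it below -/
import Mathlib

section
/- Let n = 2m be a positive even integer. Then the cardinality of the set {(c,J) : c ∈ ℤ, J ⊆ {0,…,n}, (c,|J|) ∈ F_n} equals (n+1)!/((n/2)!)^2; equivalently, Σ_{(c,ℓ)∈F_n} binom(n+1, ℓ) = (2m+1)!/(m!)^2. -/
open Finset Nat

def inF (n : ℕ) (c ℓ : ℤ) : Prop :=
  0 ≤ ℓ ∧ ℓ ≤ (n : ℤ) + 1 ∧
    (((ℓ : ℚ) ≤ (n : ℚ) / 2 ∧ (ℓ : ℚ) - (n : ℚ) / 4 ≤ (c : ℚ) ∧ (c : ℚ) ≤ (n : ℚ) / 4) ∨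
      ((n : ℚ) / 2 + 1 ≤ (ℓ : ℚ) ∧ ((n : ℚ) + 2) / 4 ≤ (c : ℚ) ∧
        (c : ℚ) ≤ (ℓ : ℚ) - ((n : ℚ) + 2) / 4))

/-!
For a fixed level `ℓ = #J` the admissible `c` form an integer interval (`levelSet`), and the
lengths of the intervals at levels `ℓ` and `2m + 1 - ℓ` add up to `2m + 1 - 2ℓ`. Pairing `J` with
its complement, the count becomes `∑_{ℓ ≤ m} (2m + 1 - 2ℓ) C(2m+1, ℓ)`, which telescopes, via
`(N - ℓ) C(N, ℓ) = (ℓ + 1) C(N, ℓ + 1)`, to `(m + 1) C(2m+1, m+1) = (2m+1)! / (m!)²`.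
-/

theorem Set.ncard_setOf_fst_mem_eq_sum {α β : Type*} [Fintype β] (s : β → Finset α) :
    {p : α × β | p.1 ∈ s p.2}.ncard = ∑ b, #(s b) := by
  rw [← Nat.card_coe_set_eq]
  let e : {p : α × β | p.1 ∈ s p.2} ≃ Σ b, s b :=
    { toFun := fun p => ⟨p.1.2, p.1.1, p.2⟩
      invFun := fun q => ⟨(q.2, q.1), q.2.2⟩
      left_inv := fun _ => rfl
      right_inv := fun _ => rfl }
  rw [Nat.card_congr e, Nat.card_sigma]
  simp only [Nat.card_eq_fintype_card, Fintype.card_coe]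

theorem sum_range_sub_two_mul_mul_choose (N k : ℕ) :
    ∑ ℓ ∈ Finset.range k, ((N : ℤ) - 2 * ℓ) * N.choose ℓ = k * N.choose k := by
  have step (ℓ : ℕ) : ((N : ℤ) - 2 * ℓ) * N.choose ℓ
      = (ℓ + 1 : ℕ) * N.choose (ℓ + 1) - ℓ * N.choose ℓ := by
    rcases le_or_gt ℓ N with h | h
    · have h' := Nat.choose_succ_right_eq N ℓ
      zify [h] at h'
      push_cast
      linear_combination -h'
    · simp [Nat.choose_eq_zero_of_lt h, Nat.choose_eq_zero_of_lt (h.trans (Nat.lt_succ_self _))]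
  simp_rw [step]
  rw [Finset.sum_range_sub (fun ℓ => (ℓ : ℤ) * N.choose ℓ)]
  simp

theorem inF_two_mul_iff (m : ℕ) (c ℓ : ℤ) :
    inF (2 * m) c ℓ ↔ 0 ≤ ℓ ∧ ℓ ≤ 2 * m + 1 ∧
      ((ℓ ≤ m ∧ 2 * ℓ ≤ 2 * c + m ∧ 2 * c ≤ m) ∨
        (m + 1 ≤ ℓ ∧ m + 1 ≤ 2 * c ∧ 2 * c + m + 1 ≤ 2 * ℓ)) := by
  unfold inF
  qify
  constructor <;> rintro ⟨h0, h1, h | h⟩ <;> refine ⟨h0, by linarith, ?_⟩ <;>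
    [left; right; left; right] <;> exact ⟨by linarith [h.1], by linarith [h.2.1], by linarith [h.2.2]⟩

noncomputable def levelSet (m ℓ : ℕ) : Finset ℤ :=
  if ℓ ≤ m then Icc ((ℓ : ℤ) - m / 2) (m / 2) else Icc (((m : ℤ) + 2) / 2) (ℓ - (m + 2) / 2)

theorem mem_levelSet_iff {m ℓ : ℕ} (hℓ : ℓ ≤ 2 * m + 1) {c : ℤ} :
    c ∈ levelSet m ℓ ↔ inF (2 * m) c ℓ := by
  rw [inF_two_mul_iff, levelSet]
  split <;> simp only [mem_Icc] <;> omega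

theorem card_levelSet_add_card_levelSet_sub {m ℓ : ℕ} (hℓ : ℓ ≤ m) :
    (#(levelSet m ℓ) + #(levelSet m (2 * m + 1 - ℓ)) : ℤ) = 2 * m + 1 - 2 * ℓ := by
  rw [levelSet, levelSet, if_pos hℓ, if_neg (by omega), Int.card_Icc, Int.card_Icc]
  omega

theorem sum_choose_mul_card_levelSet (m : ℕ) :
    ∑ ℓ ∈ range (2 * m + 2), ((2 * m + 1).choose ℓ * #(levelSet m ℓ) : ℤ)
      = (m + 1) * (2 * m + 1).choose (m + 1) := by
  rw [show 2 * m + 2 = (m + 1) + (m + 1) by ring, sum_range_add,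
    ← sum_range_reflect
      (fun ℓ => ((2 * m + 1).choose (m + 1 + ℓ) * #(levelSet m (m + 1 + ℓ)) : ℤ)),
    ← sum_add_distrib]
  have htelescope := sum_range_sub_two_mul_mul_choose (2 * m + 1) (m + 1)
  push_cast at htelescope
  rw [← htelescope]
  refine sum_congr rfl fun ℓ hℓ => ?_
  replace hℓ : ℓ ≤ m := Nat.lt_succ_iff.mp (mem_range.mp hℓ)
  rw [show m + 1 + (m + 1 - 1 - ℓ) = 2 * m + 1 - ℓ by omega, Nat.choose_symm (by omega)]
  linear_combination ((2 * m + 1).choose ℓ : ℤ) * card_levelSet_add_card_levelSet_sub hℓ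

theorem succ_mul_choose_mul_factorial_sq (m : ℕ) :
    (m + 1) * (2 * m + 1).choose (m + 1) * m ! ^ 2 = (2 * m + 1)! := by
  have h := Nat.choose_mul_factorial_mul_factorial (show m + 1 ≤ 2 * m + 1 by omega)
  rw [show 2 * m + 1 - (m + 1) = m by omega, Nat.factorial_succ] at h
  rw [← h]
  ring

theorem stmt_3_general (m : ℕ) :
    {p : ℤ × Finset (Fin (2 * m + 1)) | inF (2 * m) p.1 (p.2.card : ℤ)}.ncard
      = (2 * m + 1).factorial / m.factorial ^ 2 := by
  have hS : {p : ℤ × Finset (Fin (2 * m + 1)) | inF (2 * m) p.1 (p.2.card : ℤ)}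
      = {p | p.1 ∈ levelSet m #p.2} := by
    ext p
    exact (mem_levelSet_iff (by simpa using card_le_univ p.2)).symm
  have hsum : ∑ ℓ ∈ range (2 * m + 2), (2 * m + 1).choose ℓ * #(levelSet m ℓ)
      = (m + 1) * (2 * m + 1).choose (m + 1) := by
    exact_mod_cast sum_choose_mul_card_levelSet m
  rw [hS, Set.ncard_setOf_fst_mem_eq_sum fun J => levelSet m #J, ← powerset_univ,
    sum_powerset_apply_card fun ℓ => #(levelSet m ℓ), Finset.card_univ,
    Fintype.card_fin]
  simp only [smul_eq_mul]
  rw [hsum, ← succ_mul_choose_mul_factorial_sq, Nat.mul_div_cancel _ (by positivity)]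

/-- For `n = 2m`, the number of pairs `(c, J)` with `c ∈ ℤ`, `J ⊆ {0,…,n}`, and
`(c, |J|) ∈ F_n` equals `(n+1)!/((n/2)!)^2 = (2m+1)!/(m!)^2`. -/
theorem stmt_3 (m : ℕ) (hm : 0 < m) :
    {p : ℤ × Finset (Fin (2 * m + 1)) | inF (2 * m) p.1 (p.2.card : ℤ)}.ncard
      = (2 * m + 1).factorial / m.factorial ^ 2 :=
  stmt_3_general m
end

section
/- Let n = 2m be a positive even integer. Suppose (c_1, ℓ_1) ∈ F_n and (c_2, ℓ_2) ∈ F_n with ℓ_1 ≥ ℓ_2, and let i be an integer with 0 ≤ i ≤ ℓ_2 and i ≥ ℓ_1 + ℓ_2 − n − 1. Set c := c_1 − c_2, ℓ := ℓ_1 − i, and k := ℓ_2 − i. Then either (a) ℓ ≤ n/2 and −n/2 + ℓ ≤ c ≤ n/2 − k, or (b) ℓ > n/2 and 1 ≤ c ≤ ℓ − k − 1. -/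
/-- Integer form of membership in `F_{2m}`. -/
lemma inF_int (m : ℕ) (c ℓ : ℤ) (h : inF (2 * m) c ℓ) :
    (ℓ ≤ (m : ℤ) ∧ 2 * ℓ - (m : ℤ) ≤ 2 * c ∧ 2 * c ≤ (m : ℤ)) ∨
      ((m : ℤ) + 1 ≤ ℓ ∧ (m : ℤ) + 1 ≤ 2 * c ∧ 2 * c ≤ 2 * ℓ - (m : ℤ) - 1) := by
  obtain ⟨-, -, h | h⟩ := h
  · left
    obtain ⟨h1, h2, h3⟩ := h
    push_cast at h1 h2 h3
    refine ⟨?_, ?_, ?_⟩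
    · exact_mod_cast show (ℓ : ℚ) ≤ (m : ℚ) by linarith
    · exact_mod_cast show ((2 * ℓ - (m : ℤ) : ℤ) : ℚ) ≤ ((2 * c : ℤ) : ℚ) by
        push_cast; linarith
    · exact_mod_cast show ((2 * c : ℤ) : ℚ) ≤ ((m : ℤ) : ℚ) by push_cast; linarith
  · right
    obtain ⟨h1, h2, h3⟩ := h
    push_cast at h1 h2 h3
    refine ⟨?_, ?_, ?_⟩
    · exact_mod_cast show ((m : ℚ) + 1 : ℚ) ≤ (ℓ : ℚ) by linarith
    · exact_mod_cast show (((m : ℤ) + 1 : ℤ) : ℚ) ≤ ((2 * c : ℤ) : ℚ) by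
        push_cast; linarith
    · exact_mod_cast show ((2 * c : ℤ) : ℚ) ≤ ((2 * ℓ - (m : ℤ) - 1 : ℤ) : ℚ) by
        push_cast; linarith

/-- The numerical heart of the exceptionality proof: for `n = 2m`, if
`(c₁,ℓ₁), (c₂,ℓ₂) ∈ F_n` with `ℓ₁ ≥ ℓ₂`, and `i` is an integer with `0 ≤ i ≤ ℓ₂` and
`i ≥ ℓ₁ + ℓ₂ − n − 1`, then, setting `c := c₁ − c₂`, `ℓ := ℓ₁ − i`, `k := ℓ₂ − i`,
either (a) `ℓ ≤ n/2` and `−n/2 + ℓ ≤ c ≤ n/2 − k`, or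
(b) `ℓ > n/2` and `1 ≤ c ≤ ℓ − k − 1`. -/
theorem stmt_6 (m : ℕ) (hm : 0 < m) (c₁ c₂ ℓ₁ ℓ₂ i : ℤ)
    (h₁ : inF (2 * m) c₁ ℓ₁) (h₂ : inF (2 * m) c₂ ℓ₂) (hℓ : ℓ₂ ≤ ℓ₁)
    (hi0 : 0 ≤ i) (hi2 : i ≤ ℓ₂) (hin : ℓ₁ + ℓ₂ - (2 * m : ℤ) - 1 ≤ i) :
    ((ℓ₁ - i ≤ (m : ℤ) ∧ -(m : ℤ) + (ℓ₁ - i) ≤ c₁ - c₂ ∧ c₁ - c₂ ≤ (m : ℤ) - (ℓ₂ - i)) ∨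
      ((m : ℤ) < ℓ₁ - i ∧ 1 ≤ c₁ - c₂ ∧ c₁ - c₂ ≤ (ℓ₁ - i) - (ℓ₂ - i) - 1)) := by
  have H₁ := inF_int m c₁ ℓ₁ h₁
  have H₂ := inF_int m c₂ ℓ₂ h₂
  omega
end

section
/- Let n ≥ 2 be an integer. Work in ℝ^{n+2} with basis Ω, E_0, …, E_n. Let K and L be disjoint subsets of {0,…,n} with |K| ≤ |L|, let c ∈ ℤ, and set β := cΩ + Σ_{i∈K} E_i − Σ_{j∈L} E_j. If β lies in the cone of all ℝ_{≥0}-linear combinations of the 2n+2 vectors E_i and E_i − Ω (i ∈ {0,…,n}), then β = 0. -/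
open Finset

/-- The basis vector `Ω` of the real Picard space `ℝ^{n+2}` of `V_n`
(indexed by `Sum.inl ()`). -/
def Ov (n : ℕ) : Unit ⊕ Fin (n + 1) → ℝ := fun x => if x = Sum.inl () then 1 else 0

/-- The basis vector `E_i` of the real Picard space `ℝ^{n+2}` of `V_n`
(indexed by `Sum.inr i`). -/
def Er (n : ℕ) (i : Fin (n + 1)) : Unit ⊕ Fin (n + 1) → ℝ :=
  fun x => if x = Sum.inr i then 1 else 0

/-- The effective-cone case of Lemma 3.4: if `K, L ⊆ {0,…,n}` are disjoint with
`|K| ≤ |L|`, `c ∈ ℤ`, and `β = cΩ + ∑_{i∈K} E_i − ∑_{j∈L} E_j` is a nonnegative linear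
combination of the `2n+2` vectors `E_i` and `E_i − Ω`, then `β = 0`. -/
theorem stmt_7 (n : ℕ) (hn : 2 ≤ n) (K L : Finset (Fin (n + 1))) (hKL : Disjoint K L)
    (hcard : K.card ≤ L.card) (c : ℤ) (β : Unit ⊕ Fin (n + 1) → ℝ)
    (hβ : β = (c : ℝ) • Ov n + ∑ i ∈ K, Er n i - ∑ j ∈ L, Er n j)
    (hcone : ∃ r s : Fin (n + 1) → ℝ, (∀ i, 0 ≤ r i) ∧ (∀ i, 0 ≤ s i) ∧
      β = ∑ i, r i • Er n i + ∑ i, s i • (Er n i - Ov n)) :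
    β = 0 := by
  obtain ⟨r, s, hr, hs, hβ'⟩ := hcone
  have hcoord : ∀ j, β (Sum.inr j) = r j + s j := by
    intro j
    rw [hβ']
    simp [Er, Ov, Finset.sum_apply, Sum.inr.injEq, mul_ite]
  have hcoord2 : ∀ j, β (Sum.inr j) =
      (if j ∈ K then (1:ℝ) else 0) - (if j ∈ L then (1:ℝ) else 0) := by
    intro j
    rw [hβ]
    simp [Er, Ov, Finset.sum_apply, Sum.inr.injEq]
  have hL : L = ∅ := by
    by_contra h
    obtain ⟨j, hj⟩ := Finset.nonempty_iff_ne_empty.mpr h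
    have hjK : j ∉ K := fun hk => (Finset.disjoint_left.mp hKL hk) hj
    have h1 := hcoord j
    have h2 := hcoord2 j
    rw [if_neg hjK, if_pos hj] at h2
    have := hr j
    have := hs j
    rw [h2] at h1
    linarith
  have hK : K = ∅ := by
    rw [hL] at hcard
    simpa using Finset.card_eq_zero.mp (Nat.le_zero.mp (by simpa using hcard))
  have hzero : ∀ j, r j = 0 ∧ s j = 0 := by
    intro j
    have h1 := hcoord j
    have h2 := hcoord2 j
    rw [hK, hL] at h2
    simp at h2
    rw [h2] at h1
    constructor <;> [nlinarith [hr j, hs j]; nlinarith [hr j, hs j]]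
  rw [hβ']
  funext x
  simp [(hzero _).1, (hzero _).2]
end

section
/- Let n = 2m be a positive even integer. Work in ℝ^{n+2} with basis Ω, E_0, …, E_n, with ray classes [e_i] := E_i and [ē_i] := E_i − Ω for i ∈ {0,…,n}. Let K, L be disjoint subsets of {0,…,n}, k := |K|, ℓ := |L|, c ∈ ℤ, and β := cΩ + Σ_{i∈K} E_i − Σ_{j∈L} E_j. Assume either (ℓ ≤ n/2 and c ≥ ℓ − n/2) or (ℓ > n/2 and c ≥ 1). Then for every S ⊆ {0,…,n} with |S| ≥ n/2 + 1, the vector β does not belong to the forbidden cone F_I with I = {(i,+) : i ∈ S}, i.e. β cannot be written as Σ_{i∈S} (−1−r_{i,+})[e_i] + Σ_{i∉S} r_{i,+}[e_i] + Σ_{i=0}^{n} r_{i,−}[ē_i] with all r_{i,±} ≥ 0. -/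
open Finset

/-- The case `I = {e_i}_{i∈S}` in the proof of Lemma 3.4 (`n = 2m`): under the assumption
`(ℓ ≤ n/2 and c ≥ ℓ − n/2)` or `(ℓ > n/2 and c ≥ 1)`, the vector
`β = cΩ + ∑_{i∈K} E_i − ∑_{j∈L} E_j` does not lie in the forbidden cone
`{∑_{i∈S} (−1−r_i)E_i + ∑_{i∉S} r_i E_i + ∑_i s_i (E_i − Ω) : r, s ≥ 0}` for any
`S ⊆ {0,…,n}` with `|S| ≥ n/2 + 1`. -/
theorem stmt_8 (m : ℕ) (hm : 0 < m) (K L : Finset (Fin (2 * m + 1))) (hKL : Disjoint K L)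
    (c : ℤ)
    (hc : ((L.card : ℤ) ≤ (m : ℤ) ∧ (L.card : ℤ) - (m : ℤ) ≤ c) ∨
      ((m : ℤ) < (L.card : ℤ) ∧ 1 ≤ c))
    (S : Finset (Fin (2 * m + 1))) (hS : m + 1 ≤ S.card) :
    ¬ ∃ r s : Fin (2 * m + 1) → ℝ, (∀ i, 0 ≤ r i) ∧ (∀ i, 0 ≤ s i) ∧
      (c : ℝ) • Ov (2 * m) + ∑ i ∈ K, Er (2 * m) i - ∑ j ∈ L, Er (2 * m) j
        = ∑ i ∈ S, (-1 - r i) • Er (2 * m) i + ∑ i ∈ Sᶜ, r i • Er (2 * m) i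
          + ∑ i, s i • (Er (2 * m) i - Ov (2 * m)) := by
  rintro ⟨r, s, hr, hs, heq⟩
  have hΩ : (c : ℝ) = -∑ i, s i := by
    have h := congrFun heq (Sum.inl ())
    simp [Ov, Er, Finset.sum_apply, smul_eq_mul, mul_sub, Finset.sum_sub_distrib] at h
    linarith
  have hE : ∀ j ∈ S, j ∉ L → (1 : ℝ) ≤ s j := by
    intro j hjS hjL
    have h := congrFun heq (Sum.inr j)
    simp [Ov, Er, Finset.sum_apply, smul_eq_mul, mul_ite, Finset.sum_ite_eq',
      Finset.mem_compl, hjS, hjL] at h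
    by_cases hjK : j ∈ K <;> simp [hjK] at h <;> nlinarith [hr j]
  have hsum : ((S \ L).card : ℝ) ≤ ∑ i, s i := by
    calc ((S \ L).card : ℝ) = ∑ i ∈ S \ L, (1 : ℝ) := by simp
      _ ≤ ∑ i ∈ S \ L, s i := Finset.sum_le_sum (fun i hi => by
          rw [Finset.mem_sdiff] at hi; exact hE i hi.1 hi.2)
      _ ≤ ∑ i, s i := Finset.sum_le_sum_of_subset_of_nonneg (Finset.subset_univ _)
          (fun i _ _ => hs i)
  have hcard : S.card ≤ (S \ L).card + L.card := Finset.card_le_card_sdiff_add_card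
  rcases hc with ⟨h1, h2⟩ | ⟨h1, h2⟩
  · have hn : (m + 1 : ℕ) ≤ (S \ L).card + L.card := hS.trans hcard
    have : ((m : ℝ) + 1) ≤ ((S \ L).card : ℝ) + L.card := by exact_mod_cast hn
    have hc' : (c : ℝ) ≥ (L.card : ℝ) - m := by exact_mod_cast h2
    linarith
  · have hpos : (0 : ℝ) ≤ ∑ i, s i := Finset.sum_nonneg fun i _ => hs i
    have hc' : (1 : ℝ) ≤ (c : ℝ) := by exact_mod_cast h2
    linarith
end

section
/- Let n = 2m be a positive even integer. Work in ℝ^{n+2} with basis Ω, E_0, …, E_n, with ray classes [e_i] := E_i and [ē_i] := E_i − Ω for i ∈ {0,…,n}. Let K, L be disjoint subsets of {0,…,n}, k := |K|, ℓ := |L|, c ∈ ℤ, and β := cΩ + Σ_{i∈K} E_i − Σ_{j∈L} E_j. Assume either (ℓ ≤ n/2 and c ≤ n/2 − k) or (ℓ > n/2 and c ≤ ℓ − k − 1). Then for every S ⊆ {0,…,n} with |S| ≥ n/2 + 1, the vector β does not belong to the forbidden cone F_I with I = {(i,−) : i ∈ S}, i.e. β cannot be written as Σ_{i∈S} (−1−r_{i,−})[ē_i]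 + Σ_{i∉S} r_{i,−}[ē_i] + Σ_{i=0}^{n} r_{i,+}[e_i] with all r_{i,±} ≥ 0. -/
open Finset

/-- The case `I = {ē_i}_{i∈S}` in the proof of Lemma 3.4 (`n = 2m`): under the assumption
`(ℓ ≤ n/2 and c ≤ n/2 − k)` or `(ℓ > n/2 and c ≤ ℓ − k − 1)`, the vector
`β = cΩ + ∑_{i∈K} E_i − ∑_{j∈L} E_j` does not lie in the forbidden cone
`{∑_{i∈S} (−1−r_i)(E_i − Ω) + ∑_{i∉S} r_i (E_i − Ω) + ∑_i s_i E_i : r, s ≥ 0}` for any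
`S ⊆ {0,…,n}` with `|S| ≥ n/2 + 1`. -/
theorem stmt_9 (m : ℕ) (hm : 0 < m) (K L : Finset (Fin (2 * m + 1))) (hKL : Disjoint K L)
    (c : ℤ)
    (hc : ((L.card : ℤ) ≤ (m : ℤ) ∧ c ≤ (m : ℤ) - (K.card : ℤ)) ∨
      ((m : ℤ) < (L.card : ℤ) ∧ c ≤ (L.card : ℤ) - (K.card : ℤ) - 1))
    (S : Finset (Fin (2 * m + 1))) (hS : m + 1 ≤ S.card) :
    ¬ ∃ r s : Fin (2 * m + 1) → ℝ, (∀ i, 0 ≤ r i) ∧ (∀ i, 0 ≤ s i) ∧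
      (c : ℝ) • Ov (2 * m) + ∑ i ∈ K, Er (2 * m) i - ∑ j ∈ L, Er (2 * m) j
        = ∑ i ∈ S, (-1 - r i) • (Er (2 * m) i - Ov (2 * m))
          + ∑ i ∈ Sᶜ, r i • (Er (2 * m) i - Ov (2 * m))
          + ∑ i, s i • Er (2 * m) i := by
  rintro ⟨r, s, hr, hs, heq⟩
  have hO := congrFun heq (Sum.inl ())
  have hE := fun j => congrFun heq (Sum.inr j)
  simp only [Ov, Er, Finset.sum_apply, Pi.add_apply, Pi.sub_apply, Pi.smul_apply,
    smul_eq_mul] at hO hE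
  simp [mul_ite, Finset.sum_ite_eq] at hO hE
  -- L ⊆ S
  have hLS : L ⊆ S := by
    intro j hj
    by_contra hjS
    have hjK : j ∉ K := fun h => (Finset.disjoint_left.mp hKL h) hj
    have := hE j
    simp [hj, hjS, hjK] at this
    nlinarith [hr j, hs j]
  -- bound r on Sᶜ
  have hrb : ∀ j ∈ Sᶜ, r j ≤ (if j ∈ K then (1:ℝ) else 0) := by
    intro j hj
    rw [Finset.mem_compl] at hj
    have := hE j
    simp [hj] at this
    have hsj := hs j
    split at this <;> split at this <;> split <;> linarith
  have hsum : ∑ j ∈ Sᶜ, r j ≤ ((Sᶜ ∩ K).card : ℝ) := by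
    calc ∑ j ∈ Sᶜ, r j ≤ ∑ j ∈ Sᶜ, (if j ∈ K then (1:ℝ) else 0) :=
          Finset.sum_le_sum hrb
      _ = ∑ j ∈ Sᶜ ∩ K, (1:ℝ) := by rw [Finset.sum_ite_mem]
      _ = ((Sᶜ ∩ K).card : ℝ) := by simp
  -- c ≥ |S| - |Sᶜ ∩ K|
  have hSr : (S.card : ℝ) ≤ ∑ x ∈ S, (r x + 1) := by
    calc (S.card : ℝ) = ∑ x ∈ S, (1:ℝ) := by simp
      _ ≤ ∑ x ∈ S, (r x + 1) := Finset.sum_le_sum (fun x _ => by linarith [hr x])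
  have hcge : ((S.card : ℤ) - ((Sᶜ ∩ K).card : ℤ)) ≤ c := by
    have : ((S.card : ℝ) - ((Sᶜ ∩ K).card : ℝ)) ≤ (c : ℝ) := by
      rw [hO]; linarith
    exact_mod_cast this
  -- card facts
  have hpart : (Sᶜ ∩ K).card + (S ∩ K).card = K.card := by
    rw [← Finset.card_union_of_disjoint]
    · congr 1
      ext x
      simp [Finset.mem_compl]
      tauto
    · exact Finset.disjoint_left.mpr (by simp +contextual [Finset.mem_compl])
  have hLb : L.card + (S ∩ K).card ≤ S.card := by
    rw [← Finset.card_union_of_disjoint]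
    · exact Finset.card_le_card (Finset.union_subset hLS (Finset.inter_subset_left))
    · exact Finset.disjoint_left.mpr
        (fun a haL haSK => (Finset.disjoint_right.mp hKL haL) (Finset.mem_inter.mp haSK).2)
  have hKb : (Sᶜ ∩ K).card ≤ K.card := Finset.card_le_card (Finset.inter_subset_right)
  rcases hc with ⟨h1, h2⟩ | ⟨h1, h2⟩ <;> omega
end

section
/- Let n = 2m be a positive even integer and let J ⊆ {0,…,n} with |J| ≤ n/2. Then for every c ∈ ℤ and every L ⊆ {0,…,n} with (c,|L|) ∈ F_n, the integer |L ∩ J| − c lies in the interval [⌈(n+2)/4⌉ − (n+1−|J|), ⌈(n+2)/4⌉ − 1]. -/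
open Finset

/-- Lemma 5.12 (`n = 2m`): for `J ⊆ {0,…,n}` with `|J| ≤ n/2` and any `(c, |L|) ∈ F_n`,
the integer `|L ∩ J| − c` lies in the interval `[⌈(n+2)/4⌉ − (n+1−|J|), ⌈(n+2)/4⌉ − 1]`. -/
theorem stmt_13 (m : ℕ) (hm : 0 < m) (J : Finset (Fin (2 * m + 1))) (hJ : J.card ≤ m)
    (c : ℤ) (L : Finset (Fin (2 * m + 1))) (hL : inF (2 * m) c (L.card : ℤ)) :
    ⌈((2 * m : ℚ) + 2) / 4⌉ - ((2 * m : ℤ) + 1 - (J.card : ℤ)) ≤ ((L ∩ J).card : ℤ) - c ∧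
    ((L ∩ J).card : ℤ) - c ≤ ⌈((2 * m : ℚ) + 2) / 4⌉ - 1 := by
  obtain ⟨hL0, hL1, hcase⟩ := hL
  have hk1 : ((2 * m : ℚ) + 2) / 4 ≤ (⌈((2 * m : ℚ) + 2) / 4⌉ : ℚ) := Int.le_ceil _
  have hk2 : (⌈((2 * m : ℚ) + 2) / 4⌉ : ℚ) < ((2 * m : ℚ) + 2) / 4 + 1 :=
    Int.ceil_lt_add_one _
  set k := ⌈((2 * m : ℚ) + 2) / 4⌉ with hk
  have hk1' : (m : ℤ) + 1 ≤ 2 * k := by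
    exact_mod_cast (by push_cast at hk1 ⊢; linarith : ((m : ℚ) + 1) ≤ 2 * (k : ℚ))
  have hk2' : 2 * k ≤ (m : ℤ) + 2 := by
    have : (2 * (k : ℚ)) < (m : ℚ) + 3 := by push_cast at hk2 ⊢; linarith
    have := (by exact_mod_cast this : 2 * k < (m : ℤ) + 3)
    omega
  have ha1 : (L ∩ J).card ≤ L.card := card_le_card inter_subset_left
  have ha2 : (L ∩ J).card ≤ J.card := card_le_card inter_subset_right
  have ha3 : L.card + J.card ≤ (L ∩ J).card + (2 * m + 1) := by
    have h := card_union_add_card_inter L J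
    have h4 : (L ∪ J).card ≤ 2 * m + 1 := by
      have := card_le_card (subset_univ (L ∪ J))
      simpa using this
    omega
  rcases hcase with ⟨h5, h6, h7⟩ | ⟨h5, h6, h7⟩
  · have e5 : (L.card : ℤ) ≤ (m : ℤ) := by
      exact_mod_cast (by push_cast at h5 ⊢; linarith : ((L.card : ℚ)) ≤ (m : ℚ))
    have e6 : 2 * (L.card : ℤ) ≤ (m : ℤ) + 2 * c := by
      exact_mod_cast
        (by push_cast at h6 ⊢; linarith : 2 * ((L.card : ℚ)) ≤ (m : ℚ) + 2 * (c : ℚ))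
    have e7 : 2 * c ≤ (m : ℤ) := by
      exact_mod_cast (by push_cast at h7 ⊢; linarith : 2 * (c : ℚ) ≤ (m : ℚ))
    constructor <;> push_cast <;> omega
  · have e5 : (m : ℤ) + 1 ≤ (L.card : ℤ) := by
      exact_mod_cast (by push_cast at h5 ⊢; linarith : ((m : ℚ) + 1) ≤ (L.card : ℚ))
    have e6 : (m : ℤ) + 1 ≤ 2 * c := by
      exact_mod_cast (by push_cast at h6 ⊢; linarith : ((m : ℚ) + 1) ≤ 2 * (c : ℚ))
    have e7 : 2 * c ≤ 2 * (L.card : ℤ) - ((m : ℤ) + 1) := by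
      exact_mod_cast
        (by push_cast at h7 ⊢; linarith :
          2 * (c : ℚ) ≤ 2 * ((L.card : ℚ)) - ((m : ℚ) + 1))
    constructor <;> push_cast <;> omega
end

section
/- Let n = 2m be a positive even integer and let J ⊆ {0,…,n} with |J| ≤ n/2. Let w be an integer with 3n/4 + |J| − n ≤ w ≤ (3n+2)/4 − |J| (inequalities in ℚ). Then: (a) if w ≤ n/4, then for every subset L ⊆ J the pair (w, |L|) belongs to F_n; and (b) if w ≥ (n+2)/4, then for every subset L ⊆ J the pair (w, |L| + (n+1−|J|)) belongs to F_n. -/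
open Finset

/-- The combinatorial content of Lemma 5.9 (`n = 2m`): for `J ⊆ {0,…,n}` with `|J| ≤ n/2`
and `w ∈ ℤ` with `3n/4 + |J| − n ≤ w ≤ (3n+2)/4 − |J|`:
(a) if `w ≤ n/4` then `(w, |L|) ∈ F_n` for every `L ⊆ J`;
(b) if `w ≥ (n+2)/4` then `(w, |L| + (n+1−|J|)) ∈ F_n` for every `L ⊆ J`. -/
theorem stmt_14 (m : ℕ) (hm : 0 < m) (J : Finset (Fin (2 * m + 1))) (hJ : J.card ≤ m)
    (w : ℤ)
    (hw1 : 3 * (2 * m : ℚ) / 4 + (J.card : ℚ) - (2 * m : ℚ) ≤ (w : ℚ))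
    (hw2 : (w : ℚ) ≤ (3 * (2 * m : ℚ) + 2) / 4 - (J.card : ℚ)) :
    ((w : ℚ) ≤ (2 * m : ℚ) / 4 →
      ∀ L ⊆ J, inF (2 * m) w (L.card : ℤ)) ∧
    (((2 * m : ℚ) + 2) / 4 ≤ (w : ℚ) →
      ∀ L ⊆ J, inF (2 * m) w ((L.card : ℤ) + ((2 * m : ℤ) + 1 - (J.card : ℤ)))) := by
  have hJm : (J.card : ℚ) ≤ m := by exact_mod_cast hJ
  constructor
  · intro hwa L hL
    have hLJ : L.card ≤ J.card := card_le_card hL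
    have hLJ' : (L.card : ℚ) ≤ J.card := by exact_mod_cast hLJ
    refine ⟨by positivity, ?_, Or.inl ⟨?_, ?_, by push_cast; linarith⟩⟩
    · have : (L.card : ℤ) ≤ m := by exact_mod_cast hLJ.trans hJ
      push_cast; linarith
    · push_cast; linarith
    · push_cast; linarith
  · intro hwb L hL
    have hLJ : L.card ≤ J.card := card_le_card hL
    have hLJ' : (L.card : ℚ) ≤ J.card := by exact_mod_cast hLJ
    have hJc : (J.card : ℤ) ≤ m := by exact_mod_cast hJ
    refine ⟨?_, ?_, Or.inr ⟨?_, by push_cast; linarith, ?_⟩⟩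
    · linarith [Int.ofNat_nonneg L.card]
    · push_cast; omega
    · push_cast; linarith
    · push_cast; linarith
end

section
/- Let n ≥ 1 be an integer. In ℝ^n, let v_1, …, v_n be the standard basis vectors and v_0 := −(v_1 + ⋯ + v_n). Consider the family of 2n+2 vectors indexed by {0,…,n}×{+,−} given by w_{(i,+)} = v_i and w_{(i,−)} = −v_i. Then a subset C ⊆ {0,…,n}×{+,−} is a circuit — meaning the family (w_ρ)_{ρ∈C} is linearly dependent and for every proper subset C' ⊊ C the family (w_ρ)_{ρ∈C'} is linearly independent — if and only if either C = {(i,+),(i,−)} for some i ∈ {0,…,n}, or C contains exactly one of (i,+) and (i,−) for every i ∈ {0,…,n}. -/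
open Finset

/-- The ray generators of the fan of `V_n` in `N ≅ ℝ^n`:
`v_0 = −(v_1 + ⋯ + v_n) = (−1,…,−1)` and `v_1, …, v_n` the standard basis vectors. -/
def vgen (n : ℕ) : Fin (n + 1) → (Fin n → ℝ) :=
  fun i => Fin.cases (fun _ => -1) (fun j => Pi.single j 1) i

/-- The family of `2n+2` vectors `w_{(i,+)} = v_i` and `w_{(i,−)} = −v_i`, with `+`
encoded as `true` and `−` as `false`. -/
def wfam (n : ℕ) : Fin (n + 1) × Bool → (Fin n → ℝ) :=
  fun ρ => if ρ.2 then vgen n ρ.1 else -vgen n ρ.1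

lemma key (n : ℕ) (G : Fin (n+1) → ℝ) (hsum : ∑ i, G i • vgen n i = 0)
    (k : Fin (n+1)) (hk : G k = 0) : ∀ i, G i = 0 := by
  have hco : ∀ j : Fin n, G (Fin.succ j) = G 0 := by
    intro j
    have h := congrFun hsum j
    simp [Fin.sum_univ_succ, vgen, Pi.single_apply] at h
    linarith
  have h0 : G 0 = 0 := by
    rcases Fin.eq_zero_or_eq_succ k with h | ⟨j, rfl⟩
    · rwa [h] at hk
    · rw [← hco j]; exact hk
  intro i
  rcases Fin.eq_zero_or_eq_succ i with rfl | ⟨j, rfl⟩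
  · exact h0
  · rw [hco j]; exact h0

/-- independence of `vgen` on a set avoiding `k`. -/
lemma vgen_li (n : ℕ) (T : Finset (Fin (n+1))) (k : Fin (n+1)) (hk : k ∉ T) :
    LinearIndependent ℝ (fun i : {x // x ∈ T} => vgen n i.val) := by
  rw [Fintype.linearIndependent_iff]
  intro g hg i
  classical
  set G : Fin (n+1) → ℝ := fun i => if h : i ∈ T then g ⟨i, h⟩ else 0 with hG
  have hsum : ∑ i, G i • vgen n i = 0 := by
    rw [← Finset.sum_subset (Finset.subset_univ T)]
    · rw [← hg, ← Finset.sum_coe_sort T (fun i => G i • vgen n i)]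
      apply Finset.sum_congr rfl
      intro x _
      simp [hG, x.2]
    · intro x _ hx
      simp [hG, hx]
  have := key n G hsum k (by simp [hG, hk])
  have h2 := this i.val
  simpa [hG, i.2] using h2

/-- independence of `wfam` on a set with pairwise distinct first components missing index `k`. -/
lemma wfam_li (n : ℕ) (S : Finset (Fin (n+1) × Bool))
    (hinj : ∀ ρ ∈ S, ∀ σ ∈ S, ρ.1 = σ.1 → ρ = σ)
    (k : Fin (n+1)) (hk : ∀ b, (k, b) ∉ S) :
    LinearIndependent ℝ (fun ρ : {x // x ∈ S} => wfam n ρ.val) := by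
  classical
  set T : Finset (Fin (n+1)) := S.image Prod.fst with hT
  have hkT : k ∉ T := by
    simp only [hT, Finset.mem_image]
    rintro ⟨ρ, hρ, rfl⟩
    exact hk ρ.2 (by simpa using hρ)
  have hbase := vgen_li n T k hkT
  set f : {x // x ∈ S} → {x // x ∈ T} :=
    fun ρ => ⟨ρ.val.1, Finset.mem_image_of_mem Prod.fst ρ.2⟩ with hf
  have hfi : Function.Injective f := by
    intro ρ σ h
    have : ρ.val.1 = σ.val.1 := congrArg Subtype.val h
    exact Subtype.ext (hinj ρ.val ρ.2 σ.val σ.2 this)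
  have hcomp := hbase.comp f hfi
  have hsmul := hcomp.units_smul (fun ρ => if ρ.val.2 then 1 else -1)
  convert hsmul using 1
  funext ρ
  by_cases h : ρ.val.2 <;>
    simp [wfam, h, Pi.smul_apply', f, Function.comp, Units.smul_def]

lemma pair_dep (n : ℕ) (i : Fin (n+1)) :
    ¬ LinearIndependent ℝ
      (fun ρ : {x // x ∈ ({(i, true), (i, false)} : Finset (Fin (n+1) × Bool))} => wfam n ρ.val) := by
  intro h
  rw [Fintype.linearIndependent_iff] at h
  have hne : ((i, true) : Fin (n+1) × Bool) ≠ (i, false) := by simp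
  have hsum : ∑ ρ : {x // x ∈ ({(i, true), (i, false)} : Finset (Fin (n+1) × Bool))},
      (1:ℝ) • wfam n ρ.val = 0 := by
    rw [Finset.sum_coe_sort _ (fun ρ => (1:ℝ) • wfam n ρ), Finset.sum_pair hne]
    simp [wfam]
  have := h (fun _ => 1) hsum ⟨(i, true), by simp⟩
  norm_num at this

lemma trans_dep (n : ℕ) (C : Finset (Fin (n+1) × Bool))
    (hx : ∀ i : Fin (n + 1), Xor' ((i, true) ∈ C) ((i, false) ∈ C)) :
    ¬ LinearIndependent ℝ (fun ρ : {x // x ∈ C} => wfam n ρ.val) := by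
  classical
  intro h
  have hcard : n + 1 ≤ C.card := by
    have := Finset.card_le_card_of_injOn
      (fun i : Fin (n+1) => (i, decide ((i, true) ∈ C)))
      (s := Finset.univ) (t := C) ?_ ?_
    · simpa using this
    · intro i _
      by_cases hi : (i, true) ∈ C
      · simpa [hi] using hi
      · rcases hx i with ⟨h1, _⟩ | ⟨h1, h2⟩
        · exact absurd h1 hi
        · simpa [hi] using h1
    · intro a _ b _ hab
      exact congrArg Prod.fst hab
  have hle := h.fintype_card_le_finrank
  rw [Fintype.card_coe] at hle
  simp [Module.finrank_fintype_fun_eq_card] at hle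
  omega

lemma inj_of_not_both {n : ℕ} (C : Finset (Fin (n+1) × Bool))
    (hone : ∀ i, ¬((i, true) ∈ C ∧ (i, false) ∈ C)) :
    ∀ ρ ∈ C, ∀ σ ∈ C, ρ.1 = σ.1 → ρ = σ := by
  rintro ⟨a, b⟩ hρ ⟨c, d⟩ hσ h1
  dsimp at h1; subst h1
  cases b <;> cases d <;> simp_all


/-- Lemma 5.4: a subset `C` of the index set is a circuit (the family `(w_ρ)_{ρ∈C}` is
linearly dependent while every proper subfamily is linearly independent) iff
either `C = {(i,+), (i,−)}` for some `i`, or `C` contains exactly one of `(i,+)`, `(i,−)`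
for every `i ∈ {0,…,n}`. -/
theorem stmt_15 (n : ℕ) (hn : 1 ≤ n) (C : Finset (Fin (n + 1) × Bool)) :
    ((¬ LinearIndependent ℝ (fun ρ : {x // x ∈ C} => wfam n ρ.val)) ∧
      ∀ C' : Finset (Fin (n + 1) × Bool), C' ⊂ C →
        LinearIndependent ℝ (fun ρ : {x // x ∈ C'} => wfam n ρ.val)) ↔
    ((∃ i : Fin (n + 1), C = {(i, true), (i, false)}) ∨
      (∀ i : Fin (n + 1), Xor' ((i, true) ∈ C) ((i, false) ∈ C))) := by
  classical
  constructor
  · rintro ⟨hdep, hmin⟩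
    by_cases hB : ∃ i : Fin (n+1), (i, true) ∈ C ∧ (i, false) ∈ C
    · left
      obtain ⟨i, h1, h2⟩ := hB
      refine ⟨i, ?_⟩
      have hsub : ({(i, true), (i, false)} : Finset (Fin (n+1) × Bool)) ⊆ C := by
        intro x hx
        simp only [Finset.mem_insert, Finset.mem_singleton] at hx
        rcases hx with rfl | rfl <;> assumption
      by_contra hne
      exact pair_dep n i (hmin _ (Finset.ssubset_iff_subset_ne.mpr ⟨hsub, Ne.symm hne⟩))
    · right
      push_neg at hB
      have hone : ∀ i, ¬((i, true) ∈ C ∧ (i, false) ∈ C) := by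
        intro i ⟨ha, hb⟩; exact hB i ha hb
      intro i
      have hor : (i, true) ∈ C ∨ (i, false) ∈ C := by
        by_contra hno
        push_neg at hno
        refine hdep (wfam_li n C (inj_of_not_both C hone) i ?_)
        intro b; cases b
        · exact hno.2
        · exact hno.1
      rcases hor with h | h
      · exact Or.inl ⟨h, hB i h⟩
      · exact Or.inr ⟨h, fun ht => hB i ht h⟩
  · rintro (⟨i, rfl⟩ | hx)
    · refine ⟨pair_dep n i, ?_⟩
      intro C' hC'
      have hcard2 : ({(i, true), (i, false)} : Finset (Fin (n+1) × Bool)).card = 2 := by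
        rw [Finset.card_insert_of_notMem (by simp), Finset.card_singleton]
      have hcard : C'.card ≤ 1 := by
        have := Finset.card_lt_card hC'
        omega
      obtain ⟨k, hki⟩ : ∃ k : Fin (n+1), k ≠ i := by
        have : Nontrivial (Fin (n+1)) :=
          Fin.nontrivial_iff_two_le.mpr (by omega)
        exact exists_ne i
      refine wfam_li n C' ?_ k ?_
      · intro ρ hρ σ hσ _
        exact Finset.card_le_one.mp hcard ρ hρ σ hσ
      · intro b hb
        have := hC'.subset hb
        simp only [Finset.mem_insert, Finset.mem_singleton, Prod.mk.injEq] at this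
        rcases this with ⟨h, _⟩ | ⟨h, _⟩ <;> exact hki h
    · have hone : ∀ i, ¬((i, true) ∈ C ∧ (i, false) ∈ C) := by
        intro i ⟨ha, hb⟩
        rcases hx i with ⟨_, h2⟩ | ⟨_, h2⟩
        · exact h2 hb
        · exact h2 ha
      refine ⟨trans_dep n C hx, ?_⟩
      intro C' hC'
      obtain ⟨ρ, hρC, hρC'⟩ := Finset.exists_of_ssubset hC'
      have hone' : ∀ i, ¬((i, true) ∈ C' ∧ (i, false) ∈ C') := by
        intro i ⟨ha, hb⟩
        exact hone i ⟨hC'.subset ha, hC'.subset hb⟩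
      refine wfam_li n C' (inj_of_not_both C' hone') ρ.1 ?_
      intro b hb
      have hbC : (ρ.1, b) ∈ C := hC'.subset hb
      have heq : (ρ.1, b) = ρ :=
        inj_of_not_both C hone (ρ.1, b) hbC ρ hρC rfl
      rw [heq] at hb
      exact hρC' hb
end

section
/- Let T be a triangulated category and let A and B be full triangulated subcategories of T such that every object C of T fits into a distinguished triangle C_b → C → C_a → C_b[1] with C_a ∈ A and C_b ∈ B. Let F be an object of T admitting a distinguished triangle F_b → F → F_a → F_b[1] with F_a ∈ A and F_b ∈ B, and suppose that (1) A is contained in the smallest thick triangulated subcategory of T containing F, and (2) B is contained in the smallest thick triangulated subcategory of T containing F_b. Then the smallest thick triangulated subcategory of T containing F is T itself, i.e. F generates T. -/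
open CategoryTheory CategoryTheory.Pretriangulated CategoryTheory.Limits

section

variable {T : Type*} [Category T] [Preadditive T] [HasZeroObject T]
  [HasShift T ℤ] [∀ n : ℤ, (shiftFunctor T n).Additive] [Pretriangulated T]

/-- A predicate on objects of a pretriangulated category defines a (strictly full)
triangulated subcategory: it is closed under isomorphisms, shifts, and extensions
(cones in distinguished triangles). -/
def IsTriangulatedSub (A : T → Prop) : Prop :=
  (∀ X Y : T, (X ≅ Y) → A X → A Y) ∧
  (∀ (X : T) (n : ℤ), A X → A (X⟦n⟧)) ∧
  (∀ Tr : Triangle T, Tr ∈ (distTriang T) → A Tr.obj₁ → A Tr.obj₂ → A Tr.obj₃)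

/-- A predicate defines a thick triangulated subcategory: a triangulated subcategory
further closed under direct summands (retracts). -/
def IsThickSub (P : T → Prop) : Prop :=
  IsTriangulatedSub P ∧
    ∀ X Y : T, P X → (∃ (s : Y ⟶ X) (r : X ⟶ Y), s ≫ r = 𝟙 Y) → P Y

/-- `X` lies in the smallest thick triangulated subcategory containing `F`. -/
def InThickGen (F X : T) : Prop :=
  ∀ P : T → Prop, IsThickSub P → P F → P X

/-- Lemma 4.10: suppose every object `C` of `T` fits into a distinguished triangle
`C_b → C → C_a → C_b[1]` with `C_a ∈ A`, `C_b ∈ B` (for full triangulated subcategories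
`A`, `B` of `T`), and `F` fits into such a triangle `F_b → F → F_a → F_b[1]`. If `A` is
contained in the thick subcategory generated by `F`, and `B` is contained in the thick
subcategory generated by `F_b`, then `F` generates `T`. -/
theorem stmt_17 (A B : T → Prop) (hA : IsTriangulatedSub A) (hB : IsTriangulatedSub B)
    (hdec : ∀ X : T, ∃ (Xb Xa : T) (f : Xb ⟶ X) (g : X ⟶ Xa) (h : Xa ⟶ Xb⟦(1 : ℤ)⟧),
      Triangle.mk f g h ∈ (distTriang T) ∧ A Xa ∧ B Xb)
    (F Fb Fa : T) (f : Fb ⟶ F) (g : F ⟶ Fa) (h : Fa ⟶ Fb⟦(1 : ℤ)⟧)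
    (hF : Triangle.mk f g h ∈ (distTriang T)) (hFa : A Fa) (hFb : B Fb)
    (hgenA : ∀ X : T, A X → InThickGen F X)
    (hgenB : ∀ X : T, B X → InThickGen Fb X) :
    ∀ X : T, InThickGen F X := by
  intro X P hP hPF
  obtain ⟨⟨hiso, hshift, hext⟩, hretract⟩ := hP
  have hPFa : P Fa := hgenA Fa hFa P ⟨⟨hiso, hshift, hext⟩, hretract⟩ hPF
  -- Fb⟦1⟧ is the cone of F → Fa
  have hPFb1 : P (Fb⟦(1 : ℤ)⟧) := by
    have := hext ((Triangle.mk f g h).rotate) (rot_of_distTriang _ hF) hPF hPFa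
    exact this
  have hPFb : P Fb := by
    have h1 : P ((Fb⟦(1 : ℤ)⟧)⟦(-1 : ℤ)⟧) := hshift _ _ hPFb1
    exact hiso _ _ ((shiftFunctorCompIsoId T (1 : ℤ) (-1 : ℤ) (by ring)).app Fb) h1
  obtain ⟨Xb, Xa, f', g', h', hX, hXa, hXb⟩ := hdec X
  have hPXa : P Xa := hgenA Xa hXa P ⟨⟨hiso, hshift, hext⟩, hretract⟩ hPF
  have hPXb : P Xb := hgenB Xb hXb P ⟨⟨hiso, hshift, hext⟩, hretract⟩ hPFb
  have := hext ((Triangle.mk f' g' h').invRotate) (inv_rot_of_distTriang _ hX)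
    (hshift _ _ hPXa) hPXb
  exact this

end
end
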